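/- arXiv:2203.16272 — 2 statements merged into one kernel-verified Lean document; each statement's English description precedes it below -/
import Mathlib

section
/- Let (X,≼) be a partial order and let x, y ∈ X be incomparable (x ⋈ y). Then the following are equivalent: (i) there exists a Debreu separable linear extension ≼' of ≼ with x ≼' y; (ii) there exists an injective monotone u : X → ℝ with u(x) ≤ u(y); (iii) there exists a sequence (≼ₙ)ₙ≥₀ of partial orders on X, each extending ≼ and with ≼ₙ₊₁ extending ≼ₙ for all n ≥ 0, such that the limit ≼' = lim ≼ₙ is a Debreu separable linear extension of ≼ with x ≼' y. -/
/-- A binary relation is a partial order: reflexive, antisymmetric, transitive. -/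
def IsPartialOrderRel {X : Type*} (r : X → X → Prop) : Prop :=
  (∀ x, r x x) ∧ (∀ x y, r x y → r y x → x = y) ∧ (∀ x y z, r x y → r y z → r x z)

/-- `r'` extends `r`. -/
def RelExtends {X : Type*} (r r' : X → X → Prop) : Prop :=
  ∀ x y, r x y → r' x y

/-- `r` is total: any two elements are comparable. -/
def TotalRel {X : Type*} (r : X → X → Prop) : Prop :=
  ∀ x y, r x y ∨ r y x

/-- `r'` is a linear extension of `r`: a total partial order extending `r`. -/
def IsLinearExtension {X : Type*} (r r' : X → X → Prop) : Prop :=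
  IsPartialOrderRel r' ∧ TotalRel r' ∧ RelExtends r r'

/-- `x` and `y` are incomparable with respect to `r`. -/
def Incomp {X : Type*} (r : X → X → Prop) (x y : X) : Prop :=
  ¬ r x y ∧ ¬ r y x

/-- `D` is Debreu dense for `r`. -/
def DebreuDense {X : Type*} (r : X → X → Prop) (D : Set X) : Prop :=
  ∀ x y, r x y → ¬ r y x → ∃ d ∈ D, r x d ∧ r d y

/-- `(X, r)` is Debreu separable: it has a countable Debreu dense subset. -/
def DebreuSeparable {X : Type*} (r : X → X → Prop) : Prop :=
  ∃ D : Set X, D.Countable ∧ DebreuDense r D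

/-- The limit of a sequence of binary relations. -/
def LimitRel {X : Type*} (r : ℕ → X → X → Prop) : X → X → Prop :=
  fun x y => ∃ n₀ : ℕ, ∀ n, n₀ ≤ n → r n x y

/-!
A linear order is Debreu separable exactly when it embeds strictly monotonically into `ℝ`
(Debreu). Given a countable Debreu dense `D` with summable positive weights, `a` is sent to the
weight of `D ∩ Iic a` plus that of `D ∩ Iio a`; counting both makes `a < b` gain weight whether
the separating point of `D` is `a` itself or lies strictly above `a`. Conversely, for a strictly
monotone `u : α → ℝ`, one point in the `u`-preimage of each rational interval, together with the
lower ends of the countably many gaps `a ⋖ b`, forms a countable Debreu dense set.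
So a Debreu separable linear extension with `x ≼' y` and an injective monotone with
`u x ≤ u y` produce each other, and the constant sequence shows that the limit form is no stronger.
-/

open Set Function

theorem Summable.tsum_indicator_le_tsum_indicator {ι : Type*} {w : ι → ℝ} (hw : Summable w)
    (h0 : 0 ≤ w) {s t : Set ι} (hst : s ⊆ t) :
    ∑' i, s.indicator w i ≤ ∑' i, t.indicator w i :=
  (hw.indicator s).tsum_le_tsum (indicator_le_indicator_of_subset hst h0) (hw.indicator t)

theorem Summable.tsum_indicator_lt_tsum_indicator {ι : Type*} {w : ι → ℝ} (hw : Summable w)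
    (h0 : 0 ≤ w) {s t : Set ι} (hst : s ⊆ t) {i : ι} (hit : i ∈ t) (his : i ∉ s)
    (hi : 0 < w i) : ∑' j, s.indicator w j < ∑' j, t.indicator w j :=
  (hw.indicator s).tsum_lt_tsum (indicator_le_indicator_of_subset hst h0)
    (by rwa [indicator_of_notMem his, indicator_of_mem hit]) (hw.indicator t)

theorem exists_countable_inter_nonempty {β ι : Type*} [Countable ι] (A : ι → Set β) :
    ∃ D : Set β, D.Countable ∧ ∀ i, (A i).Nonempty → (A i ∩ D).Nonempty :=
  ⟨range fun i : {i // (A i).Nonempty} => i.2.some, countable_range _,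
    fun i hi => ⟨hi.some, hi.some_mem, ⟨i, hi⟩, rfl⟩⟩

section LinearOrder

variable {α : Type*} [LinearOrder α]

theorem DebreuSeparable.exists_strictMono_real (h : DebreuSeparable (X := α) (· ≤ ·)) :
    ∃ u : α → ℝ, StrictMono u := by
  obtain ⟨D, hDc, hD⟩ := h
  obtain ⟨ε, hε, _, hsum, -⟩ := hDc.exists_pos_hasSum_le one_pos
  let w : D → ℝ := fun d => ε d
  have h0 : 0 ≤ w := fun d => (hε d).le
  let mass (s : Set α) : ℝ := ∑' d, (Subtype.val ⁻¹' s).indicator w d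
  have mass_le {s t : Set α} (hst : s ⊆ t) : mass s ≤ mass t :=
    hsum.summable.tsum_indicator_le_tsum_indicator h0 (preimage_mono hst)
  have mass_lt {s t : Set α} (hst : s ⊆ t) {d : α} (hdD : d ∈ D) (hdt : d ∈ t) (hds : d ∉ s) :
      mass s < mass t :=
    hsum.summable.tsum_indicator_lt_tsum_indicator h0 (preimage_mono hst) (i := ⟨d, hdD⟩)
      hdt hds (hε d)
  refine ⟨fun a => mass (Iic a) + mass (Iio a), fun a b hab => ?_⟩
  obtain ⟨d, hdD, had, hdb⟩ := hD a b hab.le (not_le.2 hab)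
  rcases had.eq_or_lt with rfl | had
  · exact add_lt_add_of_le_of_lt (mass_le (Iic_subset_Iic.2 hab.le))
      (mass_lt (Iio_subset_Iio hab.le) hdD hab (lt_irrefl _))
  · exact add_lt_add_of_lt_of_le (mass_lt (Iic_subset_Iic.2 hab.le) hdD hdb (not_le.2 had))
      (mass_le (Iio_subset_Iio hab.le))

/-- A gap `a ⋖ b` is recovered from any rational `q` between `u a` and `u b`: `a` is the
greatest `c` with `u c < q`. -/
theorem StrictMono.countable_setOf_exists_covBy {u : α → ℝ} (hu : StrictMono u) :
    {a : α | ∃ b, a ⋖ b}.Countable := by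
  have hsub (q : ℚ) : {a | IsGreatest {c | u c < q} a}.Subsingleton :=
    fun _ ha _ hb => IsGreatest.unique ha hb
  refine (countable_iUnion fun q => (hsub q).countable).mono ?_
  rintro a ⟨b, hab⟩
  obtain ⟨q, haq, hqb⟩ := exists_rat_btwn (hu hab.lt)
  exact mem_iUnion.2 ⟨q, haq, fun c hc => hab.le_of_lt (hu.lt_iff_lt.1 (lt_trans hc hqb))⟩

theorem StrictMono.debreuSeparable {u : α → ℝ} (hu : StrictMono u) :
    DebreuSeparable (X := α) (· ≤ ·) := by
  obtain ⟨D, hDc, hD⟩ := exists_countable_inter_nonempty fun q : ℚ × ℚ => u ⁻¹' Ioo (q.1 : ℝ) q.2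
  refine ⟨D ∪ {a : α | ∃ b, a ⋖ b}, hDc.union hu.countable_setOf_exists_covBy,
    fun a b hab hba => ?_⟩
  have hab : a < b := lt_of_le_not_ge hab hba
  by_cases hgap : a ⋖ b
  · exact ⟨a, Or.inr ⟨b, hgap⟩, le_rfl, hab.le⟩
  obtain ⟨c, hac, hcb⟩ := (not_covBy_iff hab).1 hgap
  obtain ⟨p, hap, hpc⟩ := exists_rat_btwn (hu hac)
  obtain ⟨q, hcq, hqb⟩ := exists_rat_btwn (hu hcb)
  obtain ⟨d, ⟨hpd, hdq⟩, hdD⟩ := hD (p, q) ⟨c, hpc, hcq⟩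
  exact ⟨d, Or.inl hdD, (hu.lt_iff_lt.1 (hap.trans hpd)).le, (hu.lt_iff_lt.1 (hdq.trans hqb)).le⟩

theorem debreuSeparable_iff_exists_strictMono_real :
    DebreuSeparable (X := α) (· ≤ ·) ↔ ∃ u : α → ℝ, StrictMono u :=
  ⟨DebreuSeparable.exists_strictMono_real, fun ⟨_, hu⟩ => hu.debreuSeparable⟩

end LinearOrder

section Relations

variable {X : Type*}

noncomputable abbrev linearOrderOfTotalRel {r : X → X → Prop} (hr : IsPartialOrderRel r)
    (ht : TotalRel r) : LinearOrder X where
  le := r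
  le_refl := hr.1
  le_trans := hr.2.2
  le_antisymm := hr.2.1
  le_total := ht
  toDecidableLE := Classical.decRel r

theorem DebreuSeparable.exists_injective_monotone {r : X → X → Prop} (hsep : DebreuSeparable r)
    (hr : IsPartialOrderRel r) (ht : TotalRel r) :
    ∃ u : X → ℝ, (∀ a b, r a b → u a ≤ u b) ∧ Injective u := by
  let _ := linearOrderOfTotalRel hr ht
  obtain ⟨u, hu⟩ := debreuSeparable_iff_exists_strictMono_real.1 hsep
  exact ⟨u, fun _ _ h => hu.monotone h, hu.injective⟩

theorem isLinearExtension_comap_real {r : X → X → Prop} {u : X → ℝ}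
    (hm : ∀ a b, r a b → u a ≤ u b) (hu : Injective u) :
    IsLinearExtension r fun a b => u a ≤ u b :=
  ⟨⟨fun _ => le_rfl, fun _ _ hab hba => hu (hab.antisymm hba), fun _ _ _ => le_trans⟩,
    fun _ _ => le_total _ _, hm⟩

theorem debreuSeparable_comap_real {u : X → ℝ} (hu : Injective u) :
    DebreuSeparable fun a b : X => u a ≤ u b := by
  let _ := LinearOrder.lift' u hu
  exact StrictMono.debreuSeparable (u := u) fun _ _ h => h

theorem limitRel_const (r : X → X → Prop) : LimitRel (fun _ : ℕ => r) = r :=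
  funext₂ fun _ _ => propext ⟨fun ⟨n, h⟩ => h n le_rfl, fun h => ⟨0, fun _ _ => h⟩⟩

end Relations

theorem debreuSeparable_linearExtension_tfae_general {X : Type*}
    (r : X → X → Prop)
    (x y : X) :
    ((∃ r' : X → X → Prop,
        IsLinearExtension r r' ∧ DebreuSeparable r' ∧ r' x y) ↔
      (∃ u : X → ℝ,
        (∀ a b, r a b → u a ≤ u b) ∧ Function.Injective u ∧ u x ≤ u y)) ∧
    ((∃ u : X → ℝ,
        (∀ a b, r a b → u a ≤ u b) ∧ Function.Injective u ∧ u x ≤ u y) ↔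
      (∃ S : ℕ → X → X → Prop,
        (∀ n, IsPartialOrderRel (S n)) ∧
        (∀ n, RelExtends r (S n)) ∧
        (∀ n, RelExtends (S n) (S (n + 1))) ∧
        IsLinearExtension r (LimitRel S) ∧
        DebreuSeparable (LimitRel S) ∧
        LimitRel S x y)) := by
  have h12 : (∃ r' : X → X → Prop, IsLinearExtension r r' ∧ DebreuSeparable r' ∧ r' x y) ↔
      ∃ u : X → ℝ, (∀ a b, r a b → u a ≤ u b) ∧ Injective u ∧ u x ≤ u y := by
    constructor
    · rintro ⟨r', ⟨hpo, htot, hext⟩, hsep, hxy⟩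
      obtain ⟨u, hm, hu⟩ := hsep.exists_injective_monotone hpo htot
      exact ⟨u, fun a b h => hm a b (hext a b h), hu, hm x y hxy⟩
    · rintro ⟨u, hm, hu, hle⟩
      exact ⟨_, isLinearExtension_comap_real hm hu, debreuSeparable_comap_real hu, hle⟩
  refine ⟨h12, fun h => ?_, fun ⟨S, _, _, _, hS⟩ => h12.1 ⟨_, hS⟩⟩
  obtain ⟨r', hlin, hsep, hxy⟩ := h12.2 h
  refine ⟨fun _ => r', fun _ => hlin.1, fun _ => hlin.2.2, fun _ _ _ => id, ?_⟩
  rw [limitRel_const]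
  exact ⟨hlin, hsep, hxy⟩

theorem debreuSeparable_linearExtension_tfae {X : Type*}
    (r : X → X → Prop) (hr : IsPartialOrderRel r)
    (x y : X) (hxy : Incomp r x y) :
    ((∃ r' : X → X → Prop,
        IsLinearExtension r r' ∧ DebreuSeparable r' ∧ r' x y) ↔
      (∃ u : X → ℝ,
        (∀ a b, r a b → u a ≤ u b) ∧ Function.Injective u ∧ u x ≤ u y)) ∧
    ((∃ u : X → ℝ,
        (∀ a b, r a b → u a ≤ u b) ∧ Function.Injective u ∧ u x ≤ u y) ↔
      (∃ S : ℕ → X → X → Prop,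
        (∀ n, IsPartialOrderRel (S n)) ∧
        (∀ n, RelExtends r (S n)) ∧
        (∀ n, RelExtends (S n) (S (n + 1))) ∧
        IsLinearExtension r (LimitRel S) ∧
        DebreuSeparable (LimitRel S) ∧
        LimitRel S x y)) :=
  debreuSeparable_linearExtension_tfae_general r x y
end

section
/- Let (X,≼) be a partial order. Then (X,≼) has a multi-utility indexed by a countable set if and only if it has a Debreu separable realizer indexed by a countable set. (Equivalently: the geometrical dimension of (X,≼) is countable iff its Debreu dimension is countable.) -/
/-!
A countable multi-utility `(uᵢ)` determines each point `x` by its set of rational cuts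
`{(i, q) | q < uᵢ x}`, monotonically in `x`; a Cantor-type sum turns these sets into an injective
monotone `c : X → [0, 1)`. Each cut `(i, q)` then gives the linear extension pulled back along
`x ↦ 1[q < uᵢ x] + c x`, and together these realize `≼`; every order pulled back from `ℝ` is
Debreu separable. Conversely, each Debreu separable linear extension has a real utility
(Debreu's theorem), and these utilities form a multi-utility.
-/

open Set Function

theorem Real.exists_countable_subset_forall_lt_exists_mem_Icc (s : Set ℝ) :
    ∃ t ⊆ s, t.Countable ∧ ∀ a ∈ s, ∀ b ∈ s, a < b → ∃ c ∈ t, a ≤ c ∧ c ≤ b := by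
  obtain ⟨t, hts, htc, hst⟩ :=
    (TopologicalSpace.IsSeparable.of_separableSpace s).exists_countable_dense_subset
  -- Left endpoints of the gaps of `s` are countable: the gaps are disjoint open intervals.
  let gaps := {a ∈ s | ∃ b ∈ s, a < b ∧ Disjoint (Ioo a b) s}
  have hgaps : gaps.Countable := by
    choose! next _ hlt_next hgap using fun a (ha : a ∈ gaps) => ha.2
    have next_le : ∀ a ∈ gaps, ∀ a' ∈ gaps, a < a' → next a ≤ a' := fun a ha a' ha' h =>
      not_lt.mp fun h' => disjoint_left.mp (hgap a ha) ⟨h, h'⟩ ha'.1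
    refine Set.PairwiseDisjoint.countable_of_Ioo (y := next) (fun a ha a' ha' hne => ?_) hlt_next
    rcases hne.lt_or_gt with h | h
    · exact disjoint_left.mpr fun z hz hz' => (hz.2.trans_le (next_le a ha a' ha' h)).not_gt hz'.1
    · exact disjoint_left.mpr fun z hz hz' => (hz'.2.trans_le (next_le a' ha' a ha h)).not_gt hz.1
  refine ⟨t ∪ gaps, union_subset hts (sep_subset _ _), htc.union hgaps,
    fun a ha b hb hab => ?_⟩
  by_cases hgap : Disjoint (Ioo a b) s
  · exact ⟨a, Or.inr ⟨ha, b, hb, hab, hgap⟩, le_rfl, hab.le⟩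
  · obtain ⟨z, hz, hzs⟩ := not_disjoint_iff.mp hgap
    obtain ⟨c, hc, hct⟩ := _root_.mem_closure_iff.mp (hst hzs) (Ioo a b) isOpen_Ioo hz
    exact ⟨c, Or.inl hct, hc.1.le, hc.2.le⟩

open Cardinal in
theorem exists_injective_monotone_set_to_Ico (α : Type*) [Countable α] :
    ∃ e : Set α → ℝ, Injective e ∧ Monotone e ∧ ∀ s, e s ∈ Ico 0 1 := by
  classical
  obtain ⟨f, hf⟩ := exists_injective_nat α
  let code : Set α → ℕ → Bool := fun s n => decide (n ∈ f '' s)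
  have hcode : Injective code := fun s t h =>
    hf.image_injective <| Set.ext fun n => by simpa [code] using congr_fun h n
  have hc₀ : (0 : ℝ) ≤ 1 / 3 := by norm_num
  have hc₁ : (1 / 3 : ℝ) < 1 := by norm_num
  have hbound : ∀ g, cantorFunction (1 / 3) g ≤ 3 / 2 := fun g =>
    calc cantorFunction (1 / 3) g ≤ cantorFunction (1 / 3) fun _ => true :=
          cantorFunction_le hc₀ hc₁ fun _ _ => rfl
      _ = ∑' n : ℕ, (1 / 3 : ℝ) ^ n := tsum_congr fun n => cantorFunctionAux_true rfl
      _ = 3 / 2 := by rw [tsum_geometric_of_lt_one hc₀ hc₁]; norm_num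
  refine ⟨fun s => cantorFunction (1 / 3) (code s) / 2, fun s t h => ?_, fun s t hst => ?_,
    fun s => ⟨?_, ?_⟩⟩
  · exact hcode <|
      cantorFunction_injective (c := 1 / 3) (by norm_num) (by norm_num) (by simpa using h)
  · refine div_le_div_of_nonneg_right (cantorFunction_le hc₀ hc₁ fun n hn => ?_) zero_le_two
    simpa [code] using image_mono hst (by simpa [code] using hn)
  · exact div_nonneg (tsum_nonneg fun n => cantorFunctionAux_nonneg hc₀) zero_le_two
  · linarith [hbound (code s)]

section

variable {X I : Type*}

theorem isLinearExtension_comap_le {β : Type*} [LinearOrder β] {r : X → X → Prop} {w : X → β}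
    (hw : Injective w) (hmono : ∀ x y, r x y → w x ≤ w y) :
    IsLinearExtension r (fun x y => w x ≤ w y) :=
  ⟨⟨fun _ => le_rfl, fun _ _ hxy hyx => hw (le_antisymm hxy hyx), fun _ _ _ => le_trans⟩,
    fun _ _ => le_total _ _, hmono⟩

theorem debreuSeparable_comap_le (w : X → ℝ) : DebreuSeparable (fun x y => w x ≤ w y) := by
  obtain ⟨t, hts, htc, ht⟩ := Real.exists_countable_subset_forall_lt_exists_mem_Icc (range w)
  have := htc.to_subtype
  choose g hg using fun c : t => hts c.2
  refine ⟨range g, countable_range g, fun x y hxy hyx => ?_⟩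
  obtain ⟨c, hct, hxc, hcy⟩ := ht _ ⟨x, rfl⟩ _ ⟨y, rfl⟩ (lt_of_not_ge hyx)
  have hc : w (g ⟨c, hct⟩) = c := hg _
  exact ⟨g ⟨c, hct⟩, mem_range_self _, hxc.trans_eq hc.symm, hc.trans_le hcy⟩

def ratCuts (u : I → X → ℝ) (x : X) : Set (I × ℚ) :=
  {p | (p.2 : ℝ) < u p.1 x}

theorem ratCuts_subset_ratCuts_iff {u : I → X → ℝ} {x y : X} :
    ratCuts u x ⊆ ratCuts u y ↔ ∀ i, u i x ≤ u i y := by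
  refine ⟨fun h i => not_lt.mp fun hlt => ?_, fun h p hp => hp.trans_le (h p.1)⟩
  obtain ⟨q, hyq, hqx⟩ := exists_rat_btwn hlt
  exact hyq.not_gt (h (show (i, q) ∈ ratCuts u x from hqx))

theorem exists_debreuSeparableRealizer_of_multiUtility [Countable I] {r : X → X → Prop}
    (hanti : ∀ x y, r x y → r y x → x = y) (u : I → X → ℝ)
    (hu : ∀ x y, r x y ↔ ∀ i, u i x ≤ u i y) :
    ∃ R : I × ℚ → X → X → Prop, (∀ p, IsLinearExtension r (R p) ∧ DebreuSeparable (R p)) ∧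
      ∀ x y, r x y ↔ ∀ p, R p x y := by
  have hu' : ∀ x y, r x y ↔ ratCuts u x ⊆ ratCuts u y :=
    fun x y => (hu x y).trans ratCuts_subset_ratCuts_iff.symm
  obtain ⟨e, he_inj, he_mono, he_mem⟩ := exists_injective_monotone_set_to_Ico (I × ℚ)
  let c : X → ℝ := fun x => e (ratCuts u x)
  have hc_inj : Injective c := fun x y h =>
    hanti x y ((hu' x y).2 (he_inj h).le) ((hu' y x).2 (he_inj h).ge)
  have hc_mem : ∀ x, c x ∈ Ico 0 1 := fun x => he_mem _
  -- The cut at `p` is read off the integer part of `w p`, and `c` off its fractional part.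
  let w : I × ℚ → X → ℝ := fun p x => (ratCuts u x).indicator 1 p + c x
  have fract_w : ∀ p x, Int.fract (w p x) = c x := by
    intro p x
    by_cases hp : p ∈ ratCuts u x <;> simpa [w, hp, Int.fract_eq_self] using hc_mem x
  have hw_mono : ∀ p x y, r x y → w p x ≤ w p y := fun p x y hxy =>
    add_le_add (indicator_le_indicator_of_subset ((hu' x y).1 hxy) (fun _ => zero_le_one) p)
      (he_mono ((hu' x y).1 hxy))
  refine ⟨fun p x y => w p x ≤ w p y, fun p => ⟨?_, debreuSeparable_comap_le (w p)⟩,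
    fun x y => ⟨fun hxy p => hw_mono p x y hxy, fun h => (hu' x y).2 fun p hpx => ?_⟩⟩
  · exact isLinearExtension_comap_le
      (fun x y h => hc_inj (by rw [← fract_w p x, h, fract_w])) (hw_mono p)
  · by_contra hpy
    have := h p
    simp only [w, indicator_of_mem hpx, indicator_of_notMem hpy, Pi.one_apply] at this
    linarith [(hc_mem x).1, (hc_mem y).2]

theorem Set.Countable.exists_monotone_lt_of_mem_diff {D : Set X} (hD : D.Countable) :
    ∃ m : Set X → ℝ, Monotone m ∧
      ∀ ⦃S T : Set X⦄, S ⊆ T → ∀ d ∈ D, d ∈ T → d ∉ S → m S < m T := by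
  obtain ⟨ε, hε, _, hsum, -⟩ := hD.exists_pos_hasSum_le one_pos
  set ω := D.indicator ε
  have hω : Summable ω := summable_subtype_iff_indicator.mp hsum.summable
  have hω₀ : ∀ x, 0 ≤ ω x := indicator_nonneg fun x _ => (hε x).le
  refine ⟨fun S => ∑' x, S.indicator ω x, fun S T hST => ?_, fun S T hST d hd hdT hdS => ?_⟩
  · exact (hω.indicator S).tsum_le_tsum (indicator_le_indicator_of_subset hST hω₀)
      (hω.indicator T)
  · refine (hω.indicator S).tsum_lt_tsum (i := d) (indicator_le_indicator_of_subset hST hω₀)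
      ?_ (hω.indicator T)
    simpa [indicator_of_mem hdT, indicator_of_notMem hdS, ω, hd] using hε d

theorem exists_utility_of_debreuSeparable {R : X → X → Prop} (hR : IsPartialOrderRel R)
    (htot : TotalRel R) (hsep : DebreuSeparable R) :
    ∃ u : X → ℝ, ∀ x y, R x y ↔ u x ≤ u y := by
  obtain ⟨hrefl, hanti, htrans⟩ := hR
  obtain ⟨D, hDc, hD⟩ := hsep
  obtain ⟨m, hm, hm_lt⟩ := hDc.exists_monotone_lt_of_mem_diff
  -- A point `d` with `y ≼ d ≼ x` is below `x` but not below `y`, unless `d = y`; then it is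
  -- strictly below `x` but not strictly below `y`.
  let below : X → Set X := fun x => {d | R d x}
  let strictBelow : X → Set X := fun x => {d | R d x ∧ ¬ R x d}
  have below_mono : ∀ x y, R x y → below x ⊆ below y :=
    fun x y hxy d hdx => htrans d x y hdx hxy
  have strictBelow_mono : ∀ x y, R x y → strictBelow x ⊆ strictBelow y :=
    fun x y hxy d ⟨hdx, hxd⟩ => ⟨htrans d x y hdx hxy, fun hyd => hxd (htrans x y d hxy hyd)⟩
  refine ⟨fun x => m (below x) + m (strictBelow x), fun x y => ⟨fun hxy => ?_, fun hle => ?_⟩⟩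
  · exact add_le_add (hm (below_mono x y hxy)) (hm (strictBelow_mono x y hxy))
  · by_contra hxy
    have hyx : R y x := (htot x y).resolve_left hxy
    obtain ⟨d, hdD, hyd, hdx⟩ := hD y x hyx hxy
    refine hle.not_gt ?_
    by_cases hdy : d = y
    · subst hdy
      exact add_lt_add_of_le_of_lt (hm (below_mono d x hyx))
        (hm_lt (strictBelow_mono d x hyx) d hdD ⟨hdx, hxy⟩ fun h => h.2 (hrefl d))
    · exact add_lt_add_of_lt_of_le
        (hm_lt (below_mono y x hyx) d hdD hdx fun h => hdy (hanti d y h hyd))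
        (hm (strictBelow_mono y x hyx))

end

/-- countable geometrical dimension iff countable Debreu dimension. -/
theorem countable_multiUtility_iff_countable_debreuSeparableRealizer {X : Type*}
    (r : X → X → Prop) (hr : IsPartialOrderRel r) :
    (∃ (I : Type) (u : I → X → ℝ), Countable I ∧
        ∀ x y, r x y ↔ ∀ i, u i x ≤ u i y) ↔
    (∃ (I : Type) (R : I → X → X → Prop), Countable I ∧
        (∀ i, IsLinearExtension r (R i) ∧ DebreuSeparable (R i)) ∧
        (∀ x y, r x y ↔ ∀ i, R i x y)) := by
  constructor
  · rintro ⟨I, u, hI, hu⟩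
    obtain ⟨R, hR, hrealizer⟩ := exists_debreuSeparableRealizer_of_multiUtility hr.2.1 u hu
    exact ⟨I × ℚ, R, inferInstance, hR, hrealizer⟩
  · rintro ⟨I, R, hI, hR, hrealizer⟩
    choose u hu using fun i =>
      exists_utility_of_debreuSeparable (hR i).1.1 (hR i).1.2.1 (hR i).2
    exact ⟨I, u, hI, fun x y => (hrealizer x y).trans (forall_congr' fun i => hu i x y)⟩
end
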